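/- Let x be an affine transformation of ℝ², x·z = θ(x)z + τ(x) with θ(x) ∈ GL(2,ℝ), whose linear part θ(x) has two real eigenvalues x₁, x₂ with |x₁| > |x₂| and x₁, x₂ ≠ 1, with corresponding nonzero non-colinear eigenvectors u₁ (for x₁) and u₂ (for x₂), and let φ(x) ∈ ℝ² be the unique fixed point of x. Then for every z ∈ ℝ² with z ≠ φ(x), ‖x·z − φ(x)‖ / ‖z − φ(x)‖ ≥ d([u₁],[u₂])² · |x₁| · d([z − φ(x)],[u₂]) / (2√2). -/

import Mathlib

/-
Write `w = z - p`. Since `p` is fixed, `x·z - p = A w`. Expanding `w` in the eigenbasis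
`u₁, u₂` and applying `A` scales the `u₁`-coordinate by `x₁` and keeps `A w - x₁ w` on the line
`[u₂]`; hence `cross (A w) u₂ = x₁ · cross w u₂`. Together with `|cross a b| ≤ ‖a‖ ‖b‖` this gives
`‖A w‖ / ‖w‖ ≥ |x₁| · d([w], [u₂])`, which is stronger than the claim because
`d([u₁], [u₂]) ≤ 1 ≤ 2√2`.
-/

open scoped Pointwise
noncomputable section

/-- Operator norm of a `2×2` real matrix induced by the Euclidean norm on `ℝ²`. -/
def opNorm (A : Matrix (Fin 2) (Fin 2) ℝ) : ℝ :=
  ‖LinearMap.toContinuousLinearMap (Matrix.toEuclideanLin A)‖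

/-- The norm `‖Q‖ = sup_{g ∈ Q} ‖g‖` of a set of matrices. -/
def setNorm (Q : Set (Matrix (Fin 2) (Fin 2) ℝ)) : ℝ :=
  sSup (opNorm '' Q)

/-- `lam` is a (complex) eigenvalue of the real matrix `A`. -/
def IsEigenvalue (A : Matrix (Fin 2) (Fin 2) ℝ) (lam : ℂ) : Prop :=
  ∃ v : Fin 2 → ℂ, v ≠ 0 ∧ (A.map (Complex.ofReal)).mulVec v = lam • v

/-- `Λ(Q)`: the maximal modulus of an eigenvalue of an element of `Q`. -/
def matLambda (Q : Set (Matrix (Fin 2) (Fin 2) ℝ)) : ℝ :=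
  sSup {x : ℝ | ∃ q ∈ Q, ∃ lam : ℂ, IsEigenvalue q lam ∧ x = ‖lam‖}

/-- `E(Q)`: the minimal norm of `Q` over all conjugations by elements of `GL(2,ℝ)`. -/
def minNorm (Q : Set (Matrix (Fin 2) (Fin 2) ℝ)) : ℝ :=
  ⨅ g : GL (Fin 2) ℝ, setNorm ((fun s => (g : Matrix (Fin 2) (Fin 2) ℝ) * s * ((g⁻¹ : GL (Fin 2) ℝ) : Matrix (Fin 2) (Fin 2) ℝ)) '' Q)

/-- The canonical embedding of `SL(2,ℤ)` into the `2×2` real matrices. -/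
def toReal (g : Matrix.SpecialLinearGroup (Fin 2) ℤ) : Matrix (Fin 2) (Fin 2) ℝ :=
  (g : Matrix (Fin 2) (Fin 2) ℤ).map (Int.cast : ℤ → ℝ)

/-- The cross product (determinant) of two vectors of `ℝ²`. -/
def cross (u v : Fin 2 → ℝ) : ℝ := u 0 * v 1 - u 1 * v 0

/-- The Euclidean norm on `ℝ²`. -/
def enorm2 (u : Fin 2 → ℝ) : ℝ := Real.sqrt (u 0 ^ 2 + u 1 ^ 2)

/-- Fubini–Study distance between the lines spanned by `u` and `v`. -/
def pdist (u v : Fin 2 → ℝ) : ℝ := |cross u v| / (enorm2 u * enorm2 v)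

open Matrix

lemma enorm2_nonneg (u : Fin 2 → ℝ) : 0 ≤ enorm2 u := Real.sqrt_nonneg _

lemma enorm2_pos {u : Fin 2 → ℝ} (hu : u ≠ 0) : 0 < enorm2 u := by
  refine Real.sqrt_pos.2 ?_
  by_contra! hle
  apply hu
  ext i
  fin_cases i <;> simp <;> nlinarith [sq_nonneg (u 0), sq_nonneg (u 1)]

lemma cross_self_eq_zero (u : Fin 2 → ℝ) : cross u u = 0 := by
  simp only [cross]; ring

lemma cross_add_left (u v w : Fin 2 → ℝ) : cross (u + v) w = cross u w + cross v w := by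
  simp only [cross, Pi.add_apply]; ring

lemma cross_smul_left (c : ℝ) (u w : Fin 2 → ℝ) : cross (c • u) w = c * cross u w := by
  simp only [cross, Pi.smul_apply, smul_eq_mul]; ring

lemma right_ne_zero_of_cross_ne_zero {u v : Fin 2 → ℝ} (h : cross u v ≠ 0) : v ≠ 0 := by
  rintro rfl; simp [cross] at h

/-- Cramer's rule in `ℝ²`. -/
lemma cross_smul_eq_add (u v w : Fin 2 → ℝ) :
    cross u v • w = cross w v • u + cross u w • v := by
  ext i
  fin_cases i <;> simp [cross] <;> ring

/-- Lagrange's identity `cross u v ^ 2 + (u ⬝ᵥ v) ^ 2 = ‖u‖² ‖v‖²` makes this Cauchy–Schwarz. -/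
lemma abs_cross_le (u v : Fin 2 → ℝ) : |cross u v| ≤ enorm2 u * enorm2 v := by
  rw [enorm2, enorm2, ← Real.sqrt_mul (by positivity), ← Real.sqrt_sq_eq_abs]
  apply Real.sqrt_le_sqrt
  unfold cross
  nlinarith [sq_nonneg (u 0 * v 0 + u 1 * v 1)]

lemma pdist_nonneg (u v : Fin 2 → ℝ) : 0 ≤ pdist u v :=
  div_nonneg (abs_nonneg _) (mul_nonneg (enorm2_nonneg u) (enorm2_nonneg v))

lemma pdist_le_one (u v : Fin 2 → ℝ) : pdist u v ≤ 1 :=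
  div_le_one_of_le₀ (abs_cross_le u v) (mul_nonneg (enorm2_nonneg u) (enorm2_nonneg v))

section Eigenbasis

variable {A : Matrix (Fin 2) (Fin 2) ℝ} {x₁ x₂ : ℝ} {u₁ u₂ : Fin 2 → ℝ}

lemma cross_mulVec_eq_of_eigenbasis (he₁ : A *ᵥ u₁ = x₁ • u₁) (he₂ : A *ᵥ u₂ = x₂ • u₂)
    (hnc : cross u₁ u₂ ≠ 0) (w : Fin 2 → ℝ) :
    cross (A *ᵥ w) u₂ = x₁ * cross w u₂ := by
  have h := congrArg (fun v => cross (A *ᵥ v) u₂) (cross_smul_eq_add u₁ u₂ w)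
  simp only [mulVec_smul, mulVec_add, he₁, he₂, cross_add_left, cross_smul_left,
    cross_self_eq_zero] at h
  refine mul_left_cancel₀ hnc ?_
  linear_combination h

lemma abs_mul_pdist_le_of_eigenbasis (he₁ : A *ᵥ u₁ = x₁ • u₁) (he₂ : A *ᵥ u₂ = x₂ • u₂)
    (hnc : cross u₁ u₂ ≠ 0) {w : Fin 2 → ℝ} (hw : w ≠ 0) :
    |x₁| * pdist w u₂ ≤ enorm2 (A *ᵥ w) / enorm2 w := by
  have hw' := enorm2_pos hw
  have hu₂ := enorm2_pos (right_ne_zero_of_cross_ne_zero hnc)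
  have key : |x₁| * |cross w u₂| ≤ enorm2 (A *ᵥ w) * enorm2 u₂ := by
    simpa only [cross_mulVec_eq_of_eigenbasis he₁ he₂ hnc, abs_mul] using
      abs_cross_le (A *ᵥ w) u₂
  rw [pdist, ← mul_div_assoc, div_le_div_iff₀ (by positivity) hw']
  nlinarith

end Eigenbasis

lemma mulVec_add_sub_eq_mulVec_sub {n R : Type*} [Fintype n] [CommRing R] {A : Matrix n n R}
    {t p : n → R} (hp : A *ᵥ p + t = p) (z : n → R) : A *ᵥ z + t - p = A *ᵥ (z - p) := by
  rw [mulVec_sub]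
  linear_combination hp

theorem affine_norm_dilation_general
    (A : Matrix (Fin 2) (Fin 2) ℝ) (t : Fin 2 → ℝ)
    (x₁ x₂ : ℝ)
    (u₁ u₂ : Fin 2 → ℝ)
    (he₁ : A.mulVec u₁ = x₁ • u₁) (he₂ : A.mulVec u₂ = x₂ • u₂)
    (hnc : cross u₁ u₂ ≠ 0)
    (p : Fin 2 → ℝ) (hp : A.mulVec p + t = p) :
    ∀ z : Fin 2 → ℝ, z ≠ p →
      pdist u₁ u₂ ^ 2 * |x₁| * pdist (z - p) u₂ / (2 * Real.sqrt 2) ≤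
        enorm2 (A.mulVec z + t - p) / enorm2 (z - p) := by
  intro z hz
  have hd : pdist u₁ u₂ ^ 2 / (2 * Real.sqrt 2) ≤ 1 := by
    have h1 : pdist u₁ u₂ ^ 2 ≤ 1 :=
      pow_le_one₀ (pdist_nonneg u₁ u₂) (pdist_le_one u₁ u₂)
    have h2 : 1 ≤ 2 * Real.sqrt 2 := by linarith [Real.one_lt_sqrt_two]
    exact div_le_one_of_le₀ (h1.trans h2) (by positivity)
  calc pdist u₁ u₂ ^ 2 * |x₁| * pdist (z - p) u₂ / (2 * Real.sqrt 2)
      = pdist u₁ u₂ ^ 2 / (2 * Real.sqrt 2) * (|x₁| * pdist (z - p) u₂) := by ring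
    _ ≤ |x₁| * pdist (z - p) u₂ :=
      mul_le_of_le_one_left (mul_nonneg (abs_nonneg x₁) (pdist_nonneg (z - p) u₂)) hd
    _ ≤ enorm2 (A *ᵥ (z - p)) / enorm2 (z - p) :=
      abs_mul_pdist_le_of_eigenbasis he₁ he₂ hnc (sub_ne_zero.mpr hz)
    _ = enorm2 (A.mulVec z + t - p) / enorm2 (z - p) := by
      rw [mulVec_add_sub_eq_mulVec_sub hp]

/-- **Norm dilation for affine maps.** Let `x : z ↦ A z + t` be an affine transformation of
`ℝ²` with invertible linear part having real eigenvalues `x₁, x₂`, `|x₁| > |x₂|`,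
`x₁, x₂ ≠ 1`, eigenvectors `u₁, u₂`, and unique fixed point `p`. Then for every `z ≠ p`,
`‖x z − p‖/‖z − p‖ ≥ d([u₁],[u₂])² |x₁| d([z − p],[u₂]) / (2√2)`. -/
theorem affine_norm_dilation
    (A : Matrix (Fin 2) (Fin 2) ℝ) (t : Fin 2 → ℝ) (hA : IsUnit A.det)
    (x₁ x₂ : ℝ) (hx : |x₂| < |x₁|) (hx₁ : x₁ ≠ 1) (hx₂ : x₂ ≠ 1)
    (u₁ u₂ : Fin 2 → ℝ) (hu₁ : u₁ ≠ 0) (hu₂ : u₂ ≠ 0)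
    (he₁ : A.mulVec u₁ = x₁ • u₁) (he₂ : A.mulVec u₂ = x₂ • u₂)
    (hnc : cross u₁ u₂ ≠ 0)
    (p : Fin 2 → ℝ) (hp : A.mulVec p + t = p) :
    ∀ z : Fin 2 → ℝ, z ≠ p →
      pdist u₁ u₂ ^ 2 * |x₁| * pdist (z - p) u₂ / (2 * Real.sqrt 2) ≤
        enorm2 (A.mulVec z + t - p) / enorm2 (z - p) :=
  affine_norm_dilation_general A t x₁ x₂ u₁ u₂ he₁ he₂ hnc p hp
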